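/- arXiv:2508.01471 — 4 statements merged into one kernel-verified Lean document; each statement's English description precedes it below -/
import Mathlib

section
/- Let (H,<) be a totally ordered commutative hemiring and F a field equipped with an H-pseudonorm. Then every finite-dimensional F-algebra admits the structure of an H-pseudonormed ring, i.e., there exists a function ‖·‖ : R → H with ‖a‖ ≥ 0, ‖a‖ = 0 iff a = 0, ‖a−b‖ ≤ ‖a‖+‖b‖, and ‖ab‖ ≤ ‖a‖‖b‖. -/
/-!
Fix a basis `b` of `R` over `F` and measure `a : R` by the sum `S a` of the pseudonorms of its
coordinates. This `S` inherits positivity and the triangle inequality from `ν`, and expanding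
`a * c` in the products `b i * b j` gives `S (a * c) ≤ S a * S c * M` for any `M` bounding all
`S (b i * b j)`; taking `M = ν 1 + ∑ i j, S (b i * b j)` makes `M` positive. Then `a ↦ S a * M`
is submultiplicative.
-/

open Finset

structure IsPseudonorm {R H : Type*} [Ring R] [Zero H] [Add H] [Mul H] [LE H] (N : R → H) :
    Prop where
  nonneg : ∀ a, 0 ≤ N a
  eq_zero_iff : ∀ a, N a = 0 ↔ a = 0
  sub_le : ∀ a b, N (a - b) ≤ N a + N b
  mul_le : ∀ a b, N (a * b) ≤ N a * N b

section

variable {H : Type*} [NonUnitalCommSemiring H] [PartialOrder H]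

namespace IsPseudonorm

variable {R : Type*} [Ring R] {N : R → H}

theorem map_zero (hN : IsPseudonorm N) : N 0 = 0 :=
  (hN.eq_zero_iff 0).2 rfl

theorem map_neg (hN : IsPseudonorm N) (a : R) : N (-a) = N a := by
  apply le_antisymm
  · simpa [hN.map_zero] using hN.sub_le 0 a
  · simpa [hN.map_zero] using hN.sub_le 0 (-a)

theorem add_le (hN : IsPseudonorm N) (a b : R) : N (a + b) ≤ N a + N b := by
  simpa [hN.map_neg] using hN.sub_le a (-b)

theorem pos_of_ne_zero (hN : IsPseudonorm N) {a : R} (ha : a ≠ 0) : 0 < N a :=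
  (hN.nonneg a).lt_of_ne' (mt (hN.eq_zero_iff a).1 ha)

end IsPseudonorm

theorem isPseudonorm_mul_const_of_mul_le [MulPosStrictMono H] {R : Type*} [Ring R] {S : R → H}
    {M : H} (hS0 : ∀ a, 0 ≤ S a) (hSz : ∀ a, S a = 0 ↔ a = 0)
    (hSsub : ∀ a b, S (a - b) ≤ S a + S b)
    (hSmul : ∀ a b, S (a * b) ≤ S a * S b * M) (hM : 0 < M) :
    IsPseudonorm fun a => S a * M where
  nonneg a := by simpa using mul_le_mul_of_nonneg_right (hS0 a) hM.le
  eq_zero_iff a := by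
    refine ⟨fun h => by_contra fun ha => ?_, fun ha => by simp [ha, (hSz 0).2 rfl]⟩
    have hSa : 0 < S a := (hS0 a).lt_of_ne' (mt (hSz a).1 ha)
    simpa [h] using mul_lt_mul_of_pos_right hSa hM
  sub_le a b := by
    rw [← add_mul]
    exact mul_le_mul_of_nonneg_right (hSsub a b) hM.le
  mul_le a b := by
    rw [mul_mul_mul_comm, ← mul_assoc]
    exact mul_le_mul_of_nonneg_right (hSmul a b) hM.le

noncomputable def coordNorm {F R ι : Type*} [Ring F] [AddCommGroup R] [Module F R] [Fintype ι]
    (ν : F → H) (b : Module.Basis ι F R) (a : R) : H :=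
  ∑ i, ν (b.repr a i)

section coordNorm

variable [IsOrderedAddMonoid H] {F R ι : Type*} [Fintype ι] {ν : F → H}

section Module

variable [Ring F] [AddCommGroup R] [Module F R] (b : Module.Basis ι F R)

theorem coordNorm_nonneg (hν : IsPseudonorm ν) (a : R) : 0 ≤ coordNorm ν b a :=
  sum_nonneg fun _ _ => hν.nonneg _

theorem coordNorm_eq_zero_iff (hν : IsPseudonorm ν) (a : R) : coordNorm ν b a = 0 ↔ a = 0 := by
  rw [coordNorm, sum_eq_zero_iff_of_nonneg fun i _ => hν.nonneg _, ← b.repr.map_eq_zero_iff,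
    Finsupp.ext_iff]
  simp [hν.eq_zero_iff]

theorem coordNorm_zero (hν : IsPseudonorm ν) : coordNorm ν b (0 : R) = 0 :=
  (coordNorm_eq_zero_iff b hν 0).2 rfl

theorem coordNorm_sub_le (hν : IsPseudonorm ν) (a c : R) :
    coordNorm ν b (a - c) ≤ coordNorm ν b a + coordNorm ν b c := by
  simpa only [coordNorm, map_sub, Finsupp.sub_apply, ← sum_add_distrib] using
    sum_le_sum fun i _ => hν.sub_le (b.repr a i) (b.repr c i)

theorem coordNorm_add_le (hν : IsPseudonorm ν) (a c : R) :
    coordNorm ν b (a + c) ≤ coordNorm ν b a + coordNorm ν b c := by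
  simpa only [coordNorm, map_add, Finsupp.add_apply, ← sum_add_distrib] using
    sum_le_sum fun i _ => hν.add_le (b.repr a i) (b.repr c i)

theorem coordNorm_smul_le (hν : IsPseudonorm ν) (r : F) (a : R) :
    coordNorm ν b (r • a) ≤ ν r * coordNorm ν b a := by
  simpa only [coordNorm, map_smul, Finsupp.smul_apply, smul_eq_mul, mul_sum] using
    sum_le_sum fun i _ => hν.mul_le r (b.repr a i)

end Module

variable [CommRing F] [Ring R] [Algebra F R] (b : Module.Basis ι F R)

theorem coordNorm_mul_le [MulPosMono H] (hν : IsPseudonorm ν) {K : H}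
    (hK : ∀ i j, coordNorm ν b (b i * b j) ≤ K) (a c : R) :
    coordNorm ν b (a * c) ≤ coordNorm ν b a * coordNorm ν b c * K := by
  have hsub (g : ι → R) : coordNorm ν b (∑ i, g i) ≤ ∑ i, coordNorm ν b (g i) :=
    le_sum_of_subadditive _ (coordNorm_zero b hν).le (coordNorm_add_le b hν) _ _
  have hexpand : a * c = ∑ i, ∑ j, (b.repr a i * b.repr c j) • (b i * b j) := by
    conv_lhs => rw [← b.sum_repr a, ← b.sum_repr c]
    rw [sum_mul]
    simp only [mul_sum, smul_mul_smul_comm]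
  have : PosMulMono H := posMulMono_iff_mulPosMono.mpr ‹_›
  calc coordNorm ν b (a * c)
      ≤ ∑ i, ∑ j, coordNorm ν b ((b.repr a i * b.repr c j) • (b i * b j)) := by
        rw [hexpand]
        exact (hsub _).trans (sum_le_sum fun i _ => hsub _)
    _ ≤ ∑ i, ∑ j, ν (b.repr a i) * ν (b.repr c j) * K := by
        gcongr with i _ j _
        exact (coordNorm_smul_le b hν _ _).trans <| mul_le_mul (hν.mul_le _ _) (hK i j)
          (coordNorm_nonneg b hν _) (mul_nonneg (hν.nonneg _) (hν.nonneg _))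
    _ = coordNorm ν b a * coordNorm ν b c * K := by
        rw [coordNorm, coordNorm, sum_mul_sum, sum_mul]
        simp only [sum_mul]

theorem isPseudonorm_coordNorm_mul_const [Nontrivial F] [MulPosStrictMono H]
    (hν : IsPseudonorm ν) :
    IsPseudonorm fun a => coordNorm ν b a * (ν 1 + ∑ i, ∑ j, coordNorm ν b (b i * b j)) := by
  have hnonneg := coordNorm_nonneg b hν
  refine isPseudonorm_mul_const_of_mul_le hnonneg (coordNorm_eq_zero_iff b hν)
    (coordNorm_sub_le b hν) (coordNorm_mul_le b hν fun i j => ?_) ?_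
  · have hrow : coordNorm ν b (b i * b j) ≤ ∑ j, coordNorm ν b (b i * b j) :=
      single_le_sum (f := fun j => coordNorm ν b (b i * b j)) (fun _ _ => hnonneg _) (mem_univ j)
    have hall : ∑ j, coordNorm ν b (b i * b j) ≤ ∑ i, ∑ j, coordNorm ν b (b i * b j) :=
      single_le_sum (f := fun i => ∑ j, coordNorm ν b (b i * b j))
        (fun _ _ => sum_nonneg fun _ _ => hnonneg _) (mem_univ i)
    exact (hrow.trans hall).trans (le_add_of_nonneg_left (hν.nonneg 1))
  · exact add_pos_of_pos_of_nonneg (hν.pos_of_ne_zero one_ne_zero)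
      (sum_nonneg fun _ _ => sum_nonneg fun _ _ => hnonneg _)

end coordNorm

end

theorem finite_dimensional_algebra_pseudonormed_general
    {H : Type*} [NonUnitalCommSemiring H] [LinearOrder H]
    (haddle : ∀ a b c : H, a ≤ b → a + c ≤ b + c)
    (hmullt : ∀ a b c : H, a < b → 0 < c → a * c < b * c)
    {F : Type*} [Field F] (ν : F → H)
    (hν0 : ∀ a : F, 0 ≤ ν a) (hν1 : ∀ a : F, ν a = 0 ↔ a = 0)
    (hν2 : ∀ a b : F, ν (a - b) ≤ ν a + ν b)
    (hν3 : ∀ a b : F, ν (a * b) ≤ ν a * ν b)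
    {R : Type*} [Ring R] [Algebra F R] [FiniteDimensional F R] :
    ∃ N : R → H,
      (∀ a : R, 0 ≤ N a) ∧ (∀ a : R, N a = 0 ↔ a = 0) ∧
      (∀ a b : R, N (a - b) ≤ N a + N b) ∧
      (∀ a b : R, N (a * b) ≤ N a * N b) := by
  have : IsOrderedAddMonoid H := { add_le_add_left := fun a b h c => haddle a b c h }
  have : MulPosStrictMono H := ⟨fun c hc a b h => hmullt a b c h hc⟩
  have hN := isPseudonorm_coordNorm_mul_const (Module.finBasis F R) ⟨hν0, hν1, hν2, hν3⟩
  exact ⟨_, hN.nonneg, hN.eq_zero_iff, hN.sub_le, hN.mul_le⟩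

/-- If `(H,<)` is a totally ordered commutative hemiring and `F` is a field with an
`H`-pseudonorm, then every finite-dimensional `F`-algebra admits an `H`-pseudonorm. -/
theorem finite_dimensional_algebra_pseudonormed
    {H : Type*} [NonUnitalCommSemiring H] [LinearOrder H]
    (haddle : ∀ a b c : H, a ≤ b → a + c ≤ b + c)
    (hmulle : ∀ a b c : H, a ≤ b → 0 ≤ c → a * c ≤ b * c)
    (haddlt : ∀ a b c : H, a < b → a + c < b + c)
    (hmullt : ∀ a b c : H, a < b → 0 < c → a * c < b * c)
    {F : Type*} [Field F] (ν : F → H)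
    (hν0 : ∀ a : F, 0 ≤ ν a) (hν1 : ∀ a : F, ν a = 0 ↔ a = 0)
    (hν2 : ∀ a b : F, ν (a - b) ≤ ν a + ν b)
    (hν3 : ∀ a b : F, ν (a * b) ≤ ν a * ν b)
    {R : Type*} [Ring R] [Algebra F R] [FiniteDimensional F R] :
    ∃ N : R → H,
      (∀ a : R, 0 ≤ N a) ∧ (∀ a : R, N a = 0 ↔ a = 0) ∧
      (∀ a b : R, N (a - b) ≤ N a + N b) ∧
      (∀ a b : R, N (a * b) ≤ N a * N b) :=
  finite_dimensional_algebra_pseudonormed_general haddle hmullt ν hν0 hν1 hν2 hν3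
end

section
/- Let (S,≤) be an ordered ring that is dense and shrinkable and whose order is a join-semilattice, and let R be an S-pseudonormed ring. If (x_n) converges to a and (y_n) converges to b in R, then (x_n·y_n) converges to a·b. -/
/-!
Write `x y - a b = x (y - b) - (x - a) (-b)`. The norm of `x n` is eventually bounded, so the
first term has norm at most (bounded) × (null) and the second at most (null) × (constant);
shrinkability, applied on the side where the bound sits, makes each of them small, and density
splits `ε` between the two.
-/

open Filter

section OrderedRing

variable (S : Type*) [Ring S] [Preorder S]

def IsDenseRing : Prop :=
  ∀ α : S, 0 < α → ∃ β γ : S, 0 < β ∧ 0 < γ ∧ β + γ < α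

def IsShrinkable : Prop :=
  ∀ α M : S, 0 < α → 0 < M → ∃ αl αr : S, 0 < αl ∧ 0 < αr ∧ M * αr < α ∧ αl * M < α

variable {S} {ι : Type*}

/-- Only the upper half of `u → 0`: it is meant for sequences of nonnegative elements. -/
def TendstoZero (l : Filter ι) (u : ι → S) : Prop :=
  ∀ ε : S, 0 < ε → ∀ᶠ n in l, u n < ε

end OrderedRing

namespace TendstoZero

variable {S : Type*} [Ring S] [Preorder S] {ι : Type*} {l : Filter ι} {u v : ι → S}

theorem of_eventually_le (hv : TendstoZero l v) (huv : ∀ᶠ n in l, u n ≤ v n) :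
    TendstoZero l u := fun ε hε =>
  (hv ε hε).mp (huv.mono fun _ huvn hvn => huvn.trans_lt hvn)

theorem add [IsOrderedAddMonoid S] (hS : IsDenseRing S) (hu : TendstoZero l u)
    (hv : TendstoZero l v) :
    TendstoZero l (u + v) := fun ε hε => by
  obtain ⟨β, γ, hβ, hγ, hβγ⟩ := hS ε hε
  filter_upwards [hu β hβ, hv γ hγ] with n hun hvn
  exact (add_le_add hun.le hvn.le).trans_lt hβγ

variable [PosMulMono S] [MulPosMono S] {M : S}

theorem mul_left_of_eventually_le (hS : IsShrinkable S) (hM : 0 < M)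
    (hu : ∀ᶠ n in l, u n ≤ M) (hv0 : ∀ n, 0 ≤ v n) (hv : TendstoZero l v) :
    TendstoZero l (u * v) := fun ε hε => by
  obtain ⟨-, δ, -, hδ, hMδ, -⟩ := hS ε M hε hM
  filter_upwards [hu, hv δ hδ] with n hun hvn
  exact (mul_le_mul_of_nonneg' hun hvn.le (hv0 n) hM.le).trans_lt hMδ

theorem mul_right_of_eventually_le (hS : IsShrinkable S) (hM : 0 < M)
    (hu0 : ∀ n, 0 ≤ u n) (hu : TendstoZero l u) (hv : ∀ᶠ n in l, v n ≤ M) :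
    TendstoZero l (u * v) := fun ε hε => by
  obtain ⟨δ, -, hδ, -, -, hδM⟩ := hS ε M hε hM
  filter_upwards [hu δ hδ, hv] with n hun hvn
  exact (mul_le_mul_of_nonneg hun.le hvn (hu0 n) hM.le).trans_lt hδM

end TendstoZero

section Pseudonorm

variable {R S : Type*} [Ring R] [Ring S] [Preorder S] (ν : R → S)

theorem pseudonorm_le_sub_add (hν2 : ∀ r s : R, ν (r - s) ≤ ν r + ν s) (r a : R) :
    ν r ≤ ν (r - a) + ν (-a) := by
  simpa using hν2 (r - a) (-a)

theorem pseudonorm_mul_sub_mul_le [IsOrderedAddMonoid S] (hν2 : ∀ r s : R, ν (r - s) ≤ ν r + ν s)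
    (hν3 : ∀ r s : R, ν (r * s) ≤ ν r * ν s) (x y a b : R) :
    ν (x * y - a * b) ≤ ν x * ν (y - b) + ν (x - a) * ν (-b) :=
  calc ν (x * y - a * b) = ν (x * (y - b) - (x - a) * -b) := by congr 1; noncomm_ring
    _ ≤ ν (x * (y - b)) + ν ((x - a) * -b) := hν2 _ _
    _ ≤ ν x * ν (y - b) + ν (x - a) * ν (-b) := add_le_add (hν3 _ _) (hν3 _ _)

theorem TendstoZero.pseudonorm_mul_sub_mul [IsOrderedAddMonoid S] [PosMulMono S] [MulPosMono S]
    {ι : Type*} {l : Filter ι} (hSd : IsDenseRing S) (hSs : IsShrinkable S)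
    (hν0 : ∀ r : R, 0 ≤ ν r) (hν2 : ∀ r s : R, ν (r - s) ≤ ν r + ν s)
    (hν3 : ∀ r s : R, ν (r * s) ≤ ν r * ν s) {x y : ι → R} {a b : R}
    (hx : TendstoZero l fun n => ν (x n - a)) (hy : TendstoZero l fun n => ν (y n - b)) :
    TendstoZero l fun n => ν (x n * y n - a * b) := by
  intro ε hε
  -- `0 < 1` is not assumed, so `ε` is the positive slack in the bounds.
  have hxM : ∀ᶠ n in l, ν (x n) ≤ ε + ν (-a) := (hx ε hε).mono fun n hn =>
    (pseudonorm_le_sub_add ν hν2 (x n) a).trans (add_le_add_left hn.le _)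
  have h₁ : TendstoZero l fun n => ν (x n) * ν (y n - b) :=
    TendstoZero.mul_left_of_eventually_le hSs (hε.trans_le (le_add_of_nonneg_right (hν0 _))) hxM
      (fun _ => hν0 _) hy
  have h₂ : TendstoZero l fun n => ν (x n - a) * ν (-b) :=
    hx.mul_right_of_eventually_le hSs (hε.trans_le (le_add_of_nonneg_right (hν0 _)))
      (fun _ => hν0 _) (Eventually.of_forall fun _ => le_add_of_nonneg_left hε.le)
  exact (h₁.add hSd h₂).of_eventually_le
    (Eventually.of_forall fun n => pseudonorm_mul_sub_mul_le ν hν2 hν3 _ _ _ _) ε hε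

end Pseudonorm

theorem product_of_convergent_sequences_general
    {S : Type*} [Ring S] [SemilatticeSup S]
    (haddle : ∀ a b c : S, a ≤ b → a + c ≤ b + c)
    (hmulle : ∀ a b c : S, a ≤ b → 0 ≤ c → a * c ≤ b * c ∧ c * a ≤ c * b)
    (hdense : ∀ α : S, 0 < α → ∃ β γ : S, 0 < β ∧ 0 < γ ∧ β + γ < α)
    (hshrink : ∀ α M : S, 0 < α → 0 < M →
      ∃ αl αr : S, 0 < αl ∧ 0 < αr ∧ M * αr < α ∧ αl * M < α)
    {R : Type*} [Ring R] (ν : R → S)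
    (hν0 : ∀ r : R, 0 ≤ ν r)
    (hν2 : ∀ r s : R, ν (r - s) ≤ ν r + ν s)
    (hν3 : ∀ r s : R, ν (r * s) ≤ ν r * ν s)
    (x y : ℕ → R) (a b : R)
    (hx : ∀ ε : S, 0 < ε → ∃ N : ℕ, ∀ n ≥ N, ν (x n - a) < ε)
    (hy : ∀ ε : S, 0 < ε → ∃ N : ℕ, ∀ n ≥ N, ν (y n - b) < ε) :
    ∀ ε : S, 0 < ε → ∃ N : ℕ, ∀ n ≥ N, ν (x n * y n - a * b) < ε := by
  have : IsOrderedAddMonoid S := { add_le_add_left := fun a b h c => haddle a b c h }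
  have : PosMulMono S := ⟨fun c hc a b h => (hmulle a b c h hc).2⟩
  have : MulPosMono S := ⟨fun c hc a b h => (hmulle a b c h hc).1⟩
  have hxy : TendstoZero atTop fun n => ν (x n * y n - a * b) :=
    TendstoZero.pseudonorm_mul_sub_mul ν hdense hshrink hν0 hν2 hν3
      (fun ε hε => eventually_atTop.2 (hx ε hε)) (fun ε hε => eventually_atTop.2 (hy ε hε))
  exact fun ε hε => eventually_atTop.1 (hxy ε hε)

/-- In an `S`-pseudonormed ring over a dense, shrinkable ordered ring `S` whose
order is a join-semilattice, products of convergent sequences converge to the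
product of the limits. -/
theorem product_of_convergent_sequences
    {S : Type*} [Ring S] [SemilatticeSup S]
    (haddle : ∀ a b c : S, a ≤ b → a + c ≤ b + c)
    (hmulle : ∀ a b c : S, a ≤ b → 0 ≤ c → a * c ≤ b * c ∧ c * a ≤ c * b)
    (hdense : ∀ α : S, 0 < α → ∃ β γ : S, 0 < β ∧ 0 < γ ∧ β + γ < α)
    (hshrink : ∀ α M : S, 0 < α → 0 < M →
      ∃ αl αr : S, 0 < αl ∧ 0 < αr ∧ M * αr < α ∧ αl * M < α)
    {R : Type*} [Ring R] (ν : R → S)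
    (hν0 : ∀ r : R, 0 ≤ ν r) (hν1 : ∀ r : R, ν r = 0 ↔ r = 0)
    (hν2 : ∀ r s : R, ν (r - s) ≤ ν r + ν s)
    (hν3 : ∀ r s : R, ν (r * s) ≤ ν r * ν s)
    (x y : ℕ → R) (a b : R)
    (hx : ∀ ε : S, 0 < ε → ∃ N : ℕ, ∀ n ≥ N, ν (x n - a) < ε)
    (hy : ∀ ε : S, 0 < ε → ∃ N : ℕ, ∀ n ≥ N, ν (y n - b) < ε) :
    ∀ ε : S, 0 < ε → ∃ N : ℕ, ∀ n ≥ N, ν (x n * y n - a * b) < ε :=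
  product_of_convergent_sequences_general haddle hmulle hdense hshrink ν hν0 hν2 hν3 x y a b hx hy
end

section
/- (Cauchy Condensation Test) Let (R,<) be a dense, Cauchy complete totally ordered ring with 1, and (x_n) a positive decreasing sequence in R. Then ∑_{i=1}^∞ x_i converges in R if and only if ∑_{i=0}^∞ 2^i · x_{2^i} converges in R. -/
/-!
The partial sums `S` of `∑ x i` and `T` of `∑ 2 ^ i x (2 ^ i)` are monotone, and a monotone
sequence is bounded above by its limit, so by completeness each series converges iff its
partial sums are Cauchy. As `R` need not be Archimedean, bounded monotone sequences need not
converge, so the series are compared on tails: on the dyadic block `[2 ^ k, 2 ^ (k + 1))`, `x`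
lies between `x (2 ^ (k + 1))` and `x (2 ^ k)`, which gives
`S (2 ^ n - 1) - S (2 ^ j - 1) ≤ T n - T j` and `T (n + 1) - T (j + 1) ≤ 2 (S (2 ^ n) - S (2 ^ j))`.
Density halves `ε` to absorb the factor `2`.
-/

open Finset

section OrderedAddGroup

variable {G : Type*} [AddCommGroup G] [LinearOrder G] [IsOrderedAddMonoid G]

def SeqTendsto (s : ℕ → G) (l : G) : Prop :=
  ∀ ε : G, 0 < ε → ∃ N : ℕ, ∀ n ≥ N, |s n - l| < ε

def SeqCauchy (s : ℕ → G) : Prop :=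
  ∀ ε : G, 0 < ε → ∃ N : ℕ, ∀ m ≥ N, ∀ n ≥ N, |s n - s m| < ε

theorem exists_pos_add_self_lt (hdense : ∀ α : G, 0 < α → ∃ β γ : G, 0 < β ∧ 0 < γ ∧ β + γ < α)
    {ε : G} (hε : 0 < ε) : ∃ δ : G, 0 < δ ∧ δ + δ < ε := by
  obtain ⟨β, γ, hβ, hγ, hβγ⟩ := hdense ε hε
  exact ⟨min β γ, lt_min hβ hγ, (add_le_add (min_le_left β γ) (min_le_right β γ)).trans_lt hβγ⟩

namespace Monotone

variable {s : ℕ → G}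

theorem le_of_seqTendsto (hs : Monotone s) {l : G} (h : SeqTendsto s l) (n : ℕ) : s n ≤ l := by
  by_contra! hn
  obtain ⟨N, hN⟩ := h _ (sub_pos.2 hn)
  have hlt := (le_abs_self _).trans_lt (hN (max n N) (le_max_right n N))
  exact (sub_le_sub_right (hs (le_max_left n N)) l).not_gt hlt

theorem seqCauchy_iff (hs : Monotone s) :
    SeqCauchy s ↔ ∀ ε : G, 0 < ε → ∃ N : ℕ, ∀ n ≥ N, s n - s N < ε := by
  refine ⟨fun h ε hε => (h ε hε).imp fun N hN n hn => ?_, fun h ε hε => ?_⟩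
  · exact (le_abs_self _).trans_lt (hN N le_rfl n hn)
  · obtain ⟨N, hN⟩ := h ε hε
    refine ⟨N, fun m hm n hn => ?_⟩
    have key : ∀ {a b}, N ≤ a → a ≤ b → s b - s a < ε := fun ha hab =>
      (sub_le_sub_left (hs ha) _).trans_lt (hN _ (ha.trans hab))
    rcases le_total m n with hmn | hnm
    · rw [abs_of_nonneg (sub_nonneg.2 (hs hmn))]
      exact key hm hmn
    · rw [abs_sub_comm, abs_of_nonneg (sub_nonneg.2 (hs hnm))]
      exact key hn hnm

theorem seqCauchy_of_seqTendsto (hs : Monotone s) {l : G} (h : SeqTendsto s l) : SeqCauchy s :=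
  hs.seqCauchy_iff.2 fun ε hε => (h ε hε).imp fun N hN n _ =>
    (sub_le_sub_right (hs.le_of_seqTendsto h n) _).trans_lt
      ((le_abs_self _).trans_lt (abs_sub_comm (s N) l ▸ hN N le_rfl))

end Monotone

end OrderedAddGroup

section OrderedAddMonoid

variable {M : Type*} [AddCommMonoid M] [PartialOrder M] [IsOrderedAddMonoid M] {f : ℕ → M}

theorem Finset.le_sum_Ico_condensed (hf : ∀ ⦃m n⦄, 0 < m → m ≤ n → f n ≤ f m) {j n : ℕ}
    (h : j ≤ n) : ∑ k ∈ Ico (2 ^ j) (2 ^ n), f k ≤ ∑ k ∈ Ico j n, 2 ^ k • f (2 ^ k) := by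
  have := le_sum_schlomilch' hf (u := fun k => 2 ^ (j + k)) (fun _ => by positivity)
    (fun a b hab => Nat.pow_le_pow_right two_pos (by omega)) (n - j)
  rw [sum_Ico_eq_sum_range (fun k => 2 ^ k • f (2 ^ k))]
  simpa only [add_zero, Nat.add_sub_cancel' h, ← add_assoc, pow_succ, mul_two,
    Nat.add_sub_cancel] using this

theorem Finset.sum_Ico_condensed_le (hf : ∀ ⦃m n⦄, 1 < m → m ≤ n → f n ≤ f m) {j n : ℕ}
    (h : j ≤ n) : ∑ k ∈ Ico j n, 2 ^ k • f (2 ^ (k + 1)) ≤ ∑ k ∈ Ioc (2 ^ j) (2 ^ n), f k := by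
  have := sum_schlomilch_le' hf (u := fun k => 2 ^ (j + k)) (fun _ => by positivity)
    (fun a b hab => Nat.pow_le_pow_right two_pos (by omega)) (n - j)
  rw [sum_Ico_eq_sum_range, ← Ico_add_one_add_one_eq_Ioc]
  simpa only [add_zero, Nat.add_sub_cancel' h, ← add_assoc, pow_succ, mul_two,
    Nat.add_sub_cancel] using this

theorem monotone_sum_Icc_one (hf : ∀ n, 1 ≤ n → 0 ≤ f n) :
    Monotone fun n => ∑ i ∈ Icc 1 n, f i := fun _ _ hmn =>
  sum_le_sum_of_subset_of_nonneg (Icc_subset_Icc_right hmn) fun i hi _ => hf i (mem_Icc.1 hi).1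

end OrderedAddMonoid

theorem sum_Icc_one_sub_sum_Icc_one {G : Type*} [AddCommGroup G] (f : ℕ → G) {m n : ℕ}
    (h : m ≤ n) : ∑ i ∈ Icc 1 n, f i - ∑ i ∈ Icc 1 m, f i = ∑ i ∈ Ioc m n, f i := by
  have hIcc : ∀ k, Icc 1 k = Ioc 0 k := fun k => Icc_add_one_left_eq_Ioc 0 k
  rw [hIcc, hIcc, ← sum_Ioc_consecutive f m.zero_le h, add_sub_cancel_left]

section Ring

variable {R : Type*} [Ring R] [LinearOrder R] [IsStrictOrderedRing R] {x : ℕ → R}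

theorem monotone_sum_range_condensed (hx : ∀ n, 1 ≤ n → 0 ≤ x n) :
    Monotone fun n => ∑ i ∈ range n, (2 : R) ^ i * x (2 ^ i) :=
  monotone_nat_of_le_succ fun n => by
    rw [sum_range_succ]
    exact le_add_of_nonneg_right (mul_nonneg (by positivity) (hx _ Nat.one_le_two_pow))

theorem sum_Icc_one_two_pow_sub_le (hdec : ∀ m n, 1 ≤ m → m ≤ n → x n ≤ x m) {j n : ℕ}
    (h : j ≤ n) :
    ∑ i ∈ Icc 1 (2 ^ n - 1), x i - ∑ i ∈ Icc 1 (2 ^ j - 1), x i ≤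
      ∑ i ∈ range n, (2 : R) ^ i * x (2 ^ i) - ∑ i ∈ range j, (2 : R) ^ i * x (2 ^ i) := by
  have hpow : 2 ^ j ≤ 2 ^ n := Nat.pow_le_pow_right two_pos h
  rw [sum_Icc_one_sub_sum_Icc_one _ (Nat.sub_le_sub_right hpow 1), ← sum_Ico_eq_sub _ h,
    ← Ico_add_one_add_one_eq_Ioc, Nat.sub_add_cancel Nat.one_le_two_pow,
    Nat.sub_add_cancel Nat.one_le_two_pow]
  simpa only [nsmul_eq_mul, Nat.cast_pow, Nat.cast_ofNat] using
    le_sum_Ico_condensed (fun m n => hdec m n) h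

theorem sum_range_condensed_sub_le (hdec : ∀ m n, 1 ≤ m → m ≤ n → x n ≤ x m) {j n : ℕ}
    (h : j ≤ n) :
    ∑ i ∈ range (n + 1), (2 : R) ^ i * x (2 ^ i) - ∑ i ∈ range (j + 1), (2 : R) ^ i * x (2 ^ i) ≤
      2 * (∑ i ∈ Icc 1 (2 ^ n), x i - ∑ i ∈ Icc 1 (2 ^ j), x i) := by
  rw [← sum_Ico_eq_sub _ (Nat.add_le_add_right h 1), ← sum_Ico_add',
    sum_Icc_one_sub_sum_Icc_one _ (Nat.pow_le_pow_right two_pos h)]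
  simp only [pow_succ' (2 : R), mul_assoc, ← mul_sum]
  refine mul_le_mul_of_nonneg_left ?_ zero_le_two
  simpa only [nsmul_eq_mul, Nat.cast_pow, Nat.cast_ofNat] using
    sum_Ico_condensed_le (fun m n hm hmn => hdec m n hm.le hmn) h

theorem seqCauchy_condensed_of_seqCauchy
    (hdense : ∀ α : R, 0 < α → ∃ β γ : R, 0 < β ∧ 0 < γ ∧ β + γ < α)
    (hx : ∀ n, 1 ≤ n → 0 ≤ x n) (hdec : ∀ m n, 1 ≤ m → m ≤ n → x n ≤ x m)
    (h : SeqCauchy fun n => ∑ i ∈ Icc 1 n, x i) :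
    SeqCauchy fun n => ∑ i ∈ range n, (2 : R) ^ i * x (2 ^ i) := by
  rw [(monotone_sum_range_condensed hx).seqCauchy_iff]
  intro ε hε
  obtain ⟨δ, hδ, hδε⟩ := exists_pos_add_self_lt hdense hε
  obtain ⟨N, hN⟩ := (monotone_sum_Icc_one hx).seqCauchy_iff.1 h δ hδ
  refine ⟨N + 1, fun k hk => ?_⟩
  obtain ⟨n, rfl⟩ : ∃ n, k = n + 1 := ⟨k - 1, by omega⟩
  have hNn : N ≤ n := by omega
  have htail : ∑ i ∈ Icc 1 (2 ^ n), x i - ∑ i ∈ Icc 1 (2 ^ N), x i < δ :=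
    (sub_le_sub_left (monotone_sum_Icc_one hx (Nat.lt_two_pow_self (n := N)).le) _).trans_lt
      (hN _ (hNn.trans (Nat.lt_two_pow_self (n := n)).le))
  calc _ ≤ 2 * (∑ i ∈ Icc 1 (2 ^ n), x i - ∑ i ∈ Icc 1 (2 ^ N), x i) :=
        sum_range_condensed_sub_le hdec hNn
    _ < δ + δ := (two_mul _).trans_lt (add_lt_add htail htail)
    _ < ε := hδε

theorem seqCauchy_of_seqCauchy_condensed
    (hx : ∀ n, 1 ≤ n → 0 ≤ x n) (hdec : ∀ m n, 1 ≤ m → m ≤ n → x n ≤ x m)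
    (h : SeqCauchy fun n => ∑ i ∈ range n, (2 : R) ^ i * x (2 ^ i)) :
    SeqCauchy fun n => ∑ i ∈ Icc 1 n, x i := by
  rw [(monotone_sum_Icc_one hx).seqCauchy_iff]
  intro ε hε
  obtain ⟨N, hN⟩ := (monotone_sum_range_condensed hx).seqCauchy_iff.1 h ε hε
  refine ⟨2 ^ N - 1, fun n _ => ?_⟩
  have hn : n ≤ 2 ^ (n + N) - 1 := by
    have := Nat.lt_two_pow_self (n := n + N)
    omega
  calc _ ≤ ∑ i ∈ Icc 1 (2 ^ (n + N) - 1), x i - ∑ i ∈ Icc 1 (2 ^ N - 1), x i :=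
        sub_le_sub_right (monotone_sum_Icc_one hx hn) _
    _ ≤ ∑ i ∈ range (n + N), (2 : R) ^ i * x (2 ^ i) - ∑ i ∈ range N, (2 : R) ^ i * x (2 ^ i) :=
        sum_Icc_one_two_pow_sub_le hdec (Nat.le_add_left N n)
    _ < ε := hN _ (Nat.le_add_left N n)

end Ring

/-- Cauchy Condensation Test in a dense, Cauchy complete totally ordered ring with 1. -/
theorem cauchy_condensation_test
    {R : Type*} [Ring R] [LinearOrder R] [IsStrictOrderedRing R]
    (hdense : ∀ α : R, 0 < α → ∃ β γ : R, 0 < β ∧ 0 < γ ∧ β + γ < α)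
    (hcomplete : ∀ s : ℕ → R,
      (∀ ε : R, 0 < ε → ∃ N : ℕ, ∀ m ≥ N, ∀ n ≥ N, |s n - s m| < ε) →
      ∃ l : R, ∀ ε : R, 0 < ε → ∃ N : ℕ, ∀ n ≥ N, |s n - l| < ε)
    (x : ℕ → R) (hpos : ∀ n, 1 ≤ n → 0 < x n)
    (hdec : ∀ m n, 1 ≤ m → m ≤ n → x n ≤ x m) :
    (∃ l : R, ∀ ε : R, 0 < ε → ∃ N : ℕ, ∀ n ≥ N,
      |(∑ i ∈ Finset.Icc 1 n, x i) - l| < ε) ↔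
    (∃ l : R, ∀ ε : R, 0 < ε → ∃ N : ℕ, ∀ n ≥ N,
      |(∑ i ∈ Finset.range n, (2 : R) ^ i * x (2 ^ i)) - l| < ε) := by
  have hx : ∀ n, 1 ≤ n → 0 ≤ x n := fun n hn => (hpos n hn).le
  constructor
  · rintro ⟨l, hl⟩
    exact hcomplete _ (seqCauchy_condensed_of_seqCauchy hdense hx hdec
      ((monotone_sum_Icc_one hx).seqCauchy_of_seqTendsto hl))
  · rintro ⟨l, hl⟩
    exact hcomplete _ (seqCauchy_of_seqCauchy_condensed hx hdec
      ((monotone_sum_range_condensed hx).seqCauchy_of_seqTendsto hl))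
end

section
/- (Ratio test for ring-valued normed groups) Let (R,<) be a totally ordered commutative ring with 1 that is dense and shrinkable, and let r ∈ R be such that 1−r is invertible and (r^n) converges to 0 in R. Let (G,+) be a Cauchy complete R-normed abelian group and (x_n)_{n≥0} a sequence in G with ‖x_{n+1}‖ ≤ r·‖x_n‖ for all n. Then the series ∑_{n=0}^∞ x_n converges in G. -/
/-!
Since `0 ≤ r`, the ratio condition gives `ν xₙ ≤ rⁿ ν x₀`, and multiplying the tail of the
geometric series by the inverse `u` of `1 - r` bounds the block sums:
`ν (∑_{m ≤ i < n} xᵢ) ≤ u ν x₀ rᵐ`. Shrinkability lets `rᵐ → 0` beat the constant factor, so the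
partial sums are Cauchy and converge by completeness. A negative `r` gives
`ν xₙ₊₁ ≤ 0 · ν xₙ`, which reduces it to the case `r = 0`.
-/

open Finset

section MapSubLe

variable {R G : Type*} {ν : G → R}

theorem map_neg_of_map_sub_le [AddZeroClass R] [PartialOrder R] [AddGroup G] (h0 : ν 0 = 0)
    (hsub : ∀ g h : G, ν (g - h) ≤ ν g + ν h) (g : G) : ν (-g) = ν g := by
  have neg_le : ∀ g : G, ν (-g) ≤ ν g := fun g => by simpa [h0] using hsub 0 g
  exact le_antisymm (neg_le g) (by simpa using neg_le (-g))

theorem map_sub_comm_of_map_sub_le [AddZeroClass R] [PartialOrder R] [AddGroup G]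
    (h0 : ν 0 = 0) (hsub : ∀ g h : G, ν (g - h) ≤ ν g + ν h) (g h : G) :
    ν (g - h) = ν (h - g) := by
  rw [← map_neg_of_map_sub_le h0 hsub, neg_sub]

theorem map_add_le_of_map_sub_le [AddZeroClass R] [PartialOrder R] [AddGroup G]
    (h0 : ν 0 = 0) (hsub : ∀ g h : G, ν (g - h) ≤ ν g + ν h) (g h : G) :
    ν (g + h) ≤ ν g + ν h := by
  simpa [map_neg_of_map_sub_le h0 hsub] using hsub g (-h)

theorem map_sum_le_of_map_sub_le [AddCommMonoid R] [PartialOrder R] [IsOrderedAddMonoid R]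
    [AddCommGroup G] (h0 : ν 0 = 0) (hsub : ∀ g h : G, ν (g - h) ≤ ν g + ν h)
    {ι : Type*} (s : Finset ι) (f : ι → G) : ν (∑ i ∈ s, f i) ≤ ∑ i ∈ s, ν (f i) := by
  classical
  induction s using Finset.induction_on with
  | empty => simp [h0]
  | insert a s ha ih =>
    rw [sum_insert ha, sum_insert ha]
    exact (map_add_le_of_map_sub_le h0 hsub _ _).trans (add_le_add_right ih _)

end MapSubLe

section OrderedRing

variable {R : Type*} [CommRing R] [LinearOrder R] [IsStrictOrderedRing R]

theorem abs_lt_one_of_forall_pow_small {r : R}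
    (hr0 : ∀ ε : R, 0 < ε → ∃ N : ℕ, ∀ n ≥ N, |r ^ n| < ε) : |r| < 1 := by
  by_contra! h
  obtain ⟨N, hN⟩ := hr0 1 one_pos
  have := hN N le_rfl
  rw [abs_pow] at this
  exact (one_le_pow₀ h).not_gt this

theorem geom_sum_Ico_le {r u : R} (hr : 0 ≤ r) (hu0 : 0 ≤ u) (hu : (1 - r) * u = 1)
    {m n : ℕ} (hmn : m ≤ n) : ∑ i ∈ Ico m n, r ^ i ≤ u * r ^ m := by
  calc ∑ i ∈ Ico m n, r ^ i = u * ((∑ i ∈ Ico m n, r ^ i) * (1 - r)) := by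
        rw [mul_comm _ (1 - r), ← mul_assoc, mul_comm u, hu, one_mul]
    _ = u * (r ^ m - r ^ n) := by rw [geom_sum_Ico_mul_neg r hmn]
    _ ≤ u * r ^ m := mul_le_mul_of_nonneg_left (sub_le_self _ (pow_nonneg hr n)) hu0

theorem exists_mul_abs_pow_lt {r M ε : R}
    (hshrink : ∀ α M : R, 0 < α → 0 < M → ∃ αr : R, 0 < αr ∧ M * αr < α)
    (hr0 : ∀ ε : R, 0 < ε → ∃ N : ℕ, ∀ n ≥ N, |r ^ n| < ε) (hM : 0 ≤ M) (hε : 0 < ε) :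
    ∃ N : ℕ, ∀ n ≥ N, M * |r ^ n| < ε := by
  rcases hM.eq_or_lt with rfl | hM
  · exact ⟨0, fun _ _ => by simpa using hε⟩
  obtain ⟨αr, hαr, hMαr⟩ := hshrink ε M hε hM
  obtain ⟨N, hN⟩ := hr0 αr hαr
  exact ⟨N, fun n hn => (mul_lt_mul_of_pos_left (hN n hn) hM).trans hMαr⟩

theorem map_le_pow_mul_of_ratio {G : Type*} {ν : G → R} {r : R} (hr : 0 ≤ r) {x : ℕ → G}
    (hratio : ∀ n : ℕ, ν (x (n + 1)) ≤ r * ν (x n)) (n : ℕ) : ν (x n) ≤ r ^ n * ν (x 0) := by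
  induction n with
  | zero => simp
  | succ n ih =>
    calc ν (x (n + 1)) ≤ r * ν (x n) := hratio n
      _ ≤ r * (r ^ n * ν (x 0)) := mul_le_mul_of_nonneg_left ih hr
      _ = r ^ (n + 1) * ν (x 0) := by ring

variable {G : Type*} [AddCommGroup G] {ν : G → R}

theorem map_sum_Ico_le_of_ratio {r u : R} (hr : 0 ≤ r) (hu0 : 0 ≤ u) (hu : (1 - r) * u = 1)
    (hν0 : ∀ g : G, 0 ≤ ν g) (h0 : ν 0 = 0) (hsub : ∀ g h : G, ν (g - h) ≤ ν g + ν h)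
    {x : ℕ → G} (hratio : ∀ n : ℕ, ν (x (n + 1)) ≤ r * ν (x n)) {m n : ℕ} (hmn : m ≤ n) :
    ν (∑ i ∈ Ico m n, x i) ≤ u * ν (x 0) * r ^ m :=
  calc ν (∑ i ∈ Ico m n, x i) ≤ ∑ i ∈ Ico m n, ν (x i) := map_sum_le_of_map_sub_le h0 hsub _ _
    _ ≤ ∑ i ∈ Ico m n, r ^ i * ν (x 0) :=
        sum_le_sum fun i _ => map_le_pow_mul_of_ratio hr hratio i
    _ = (∑ i ∈ Ico m n, r ^ i) * ν (x 0) := (sum_mul _ _ _).symm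
    _ ≤ u * r ^ m * ν (x 0) := mul_le_mul_of_nonneg_right (geom_sum_Ico_le hr hu0 hu hmn) (hν0 _)
    _ = u * ν (x 0) * r ^ m := by ring

theorem cauchy_partial_sums_of_ratio {r : R}
    (hshrink : ∀ α M : R, 0 < α → 0 < M → ∃ αr : R, 0 < αr ∧ M * αr < α)
    (hr : 0 ≤ r) (hu : IsUnit (1 - r))
    (hr0 : ∀ ε : R, 0 < ε → ∃ N : ℕ, ∀ n ≥ N, |r ^ n| < ε)
    (hν0 : ∀ g : G, 0 ≤ ν g) (h0 : ν 0 = 0) (hsub : ∀ g h : G, ν (g - h) ≤ ν g + ν h)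
    {x : ℕ → G} (hratio : ∀ n : ℕ, ν (x (n + 1)) ≤ r * ν (x n)) :
    ∀ ε : R, 0 < ε → ∃ N : ℕ, ∀ m ≥ N, ∀ n ≥ N,
      ν ((∑ i ∈ range n, x i) - ∑ i ∈ range m, x i) < ε := by
  intro ε hε
  have hr1 : r < 1 := (le_abs_self r).trans_lt (abs_lt_one_of_forall_pow_small hr0)
  obtain ⟨u, hu⟩ := hu.exists_right_inv
  have hu0 : 0 ≤ u := (pos_of_mul_pos_right (hu.symm ▸ one_pos) (sub_pos.2 hr1).le).le
  obtain ⟨N, hN⟩ := exists_mul_abs_pow_lt hshrink hr0 (mul_nonneg hu0 (hν0 (x 0))) hε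
  have block_lt : ∀ m ≥ N, ∀ n ≥ m, ν ((∑ i ∈ range n, x i) - ∑ i ∈ range m, x i) < ε := by
    intro m hm n hmn
    rw [← sum_Ico_eq_sub x hmn]
    refine (map_sum_Ico_le_of_ratio hr hu0 hu hν0 h0 hsub hratio hmn).trans_lt ?_
    simpa [abs_of_nonneg (pow_nonneg hr m)] using hN m hm
  refine ⟨N, fun m hm n hn => ?_⟩
  rcases le_total m n with hmn | hnm
  · exact block_lt m hm n hmn
  · rw [map_sub_comm_of_map_sub_le h0 hsub]
    exact block_lt n hn m hnm

end OrderedRing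

theorem ratio_test_ring_valued_normed_group_general
    {R : Type*} [CommRing R] [LinearOrder R] [IsStrictOrderedRing R]
    (hshrink : ∀ α M : R, 0 < α → 0 < M →
      ∃ αl αr : R, 0 < αl ∧ 0 < αr ∧ M * αr < α ∧ αl * M < α)
    (r : R) (hu : IsUnit (1 - r))
    (hr0 : ∀ ε : R, 0 < ε → ∃ N : ℕ, ∀ n ≥ N, |r ^ n| < ε)
    {G : Type*} [AddCommGroup G] (ν : G → R)
    (hν0 : ∀ g : G, 0 ≤ ν g) (hν1 : ∀ g : G, ν g = 0 ↔ g = 0)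
    (hν2 : ∀ g h : G, ν (g - h) ≤ ν g + ν h)
    (hcomplete : ∀ s : ℕ → G,
      (∀ ε : R, 0 < ε → ∃ N : ℕ, ∀ m ≥ N, ∀ n ≥ N, ν (s n - s m) < ε) →
      ∃ l : G, ∀ ε : R, 0 < ε → ∃ N : ℕ, ∀ n ≥ N, ν (s n - l) < ε)
    (x : ℕ → G) (hratio : ∀ n : ℕ, ν (x (n + 1)) ≤ r * ν (x n)) :
    ∃ l : G, ∀ ε : R, 0 < ε → ∃ N : ℕ, ∀ n ≥ N,
      ν ((∑ i ∈ Finset.range n, x i) - l) < ε := by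
  have hshrink' : ∀ α M : R, 0 < α → 0 < M → ∃ αr : R, 0 < αr ∧ M * αr < α :=
    fun α M hα hM =>
      let ⟨_, αr, _, hαr, hMαr, _⟩ := hshrink α M hα hM
      ⟨αr, hαr, hMαr⟩
  have h0 : ν 0 = 0 := (hν1 0).2 rfl
  apply hcomplete
  rcases le_or_gt 0 r with hr | hr
  · exact cauchy_partial_sums_of_ratio hshrink' hr hu hr0 hν0 h0 hν2 hratio
  · have hratio0 : ∀ n : ℕ, ν (x (n + 1)) ≤ 0 * ν (x n) := fun n => by
      simpa using (hratio n).trans (mul_nonpos_of_nonpos_of_nonneg hr.le (hν0 _))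
    have hpow0 : ∀ ε : R, 0 < ε → ∃ N : ℕ, ∀ n ≥ N, |(0 : R) ^ n| < ε :=
      fun ε hε => ⟨1, fun n hn => by simpa [zero_pow (by omega : n ≠ 0)] using hε⟩
    exact cauchy_partial_sums_of_ratio hshrink' le_rfl (by simp) hpow0 hν0 h0 hν2 hratio0

/-- Ratio test for ring-valued normed groups: over a dense and shrinkable totally
ordered commutative ring `R` with `1 - r` invertible and `r^n → 0`, if `G` is a
Cauchy complete `R`-normed abelian group and `‖x_{n+1}‖ ≤ r‖x_n‖` for all `n`,
then `∑ x_n` converges in `G`. -/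
theorem ratio_test_ring_valued_normed_group
    {R : Type*} [CommRing R] [LinearOrder R] [IsStrictOrderedRing R]
    (hdense : ∀ α : R, 0 < α → ∃ β γ : R, 0 < β ∧ 0 < γ ∧ β + γ < α)
    (hshrink : ∀ α M : R, 0 < α → 0 < M →
      ∃ αl αr : R, 0 < αl ∧ 0 < αr ∧ M * αr < α ∧ αl * M < α)
    (r : R) (hu : IsUnit (1 - r))
    (hr0 : ∀ ε : R, 0 < ε → ∃ N : ℕ, ∀ n ≥ N, |r ^ n| < ε)
    {G : Type*} [AddCommGroup G] (ν : G → R)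
    (hν0 : ∀ g : G, 0 ≤ ν g) (hν1 : ∀ g : G, ν g = 0 ↔ g = 0)
    (hν2 : ∀ g h : G, ν (g - h) ≤ ν g + ν h)
    (hcomplete : ∀ s : ℕ → G,
      (∀ ε : R, 0 < ε → ∃ N : ℕ, ∀ m ≥ N, ∀ n ≥ N, ν (s n - s m) < ε) →
      ∃ l : G, ∀ ε : R, 0 < ε → ∃ N : ℕ, ∀ n ≥ N, ν (s n - l) < ε)
    (x : ℕ → G) (hratio : ∀ n : ℕ, ν (x (n + 1)) ≤ r * ν (x n)) :
    ∃ l : G, ∀ ε : R, 0 < ε → ∃ N : ℕ, ∀ n ≥ N,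
      ν ((∑ i ∈ Finset.range n, x i) - l) < ε :=
  ratio_test_ring_valued_normed_group_general hshrink r hu hr0 ν hν0 hν1 hν2 hcomplete x hratio
end
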